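/- Fix α ∈ (0,1) with Σλᵢ/μᵢ < 1 − |2α − 1| ≤ 1 so that both x = 0 and x = 1 are feasible. At x = 0, the partial derivative of the (unnormalized) two-queue waiting-time objective L(x) = A_x C_x/(α(α−B_x)) + A_y C_y/((1−α)(1−α−B_y)) with respect to each xᵢ is strictly negative; at x = 1, each partial derivative is strictly positive. Consequently, neither x = 0 nor x = 1 is optimal for the stochastic assignment problem with α ∈ (0,1). -/

import Mathlib

/-!
The partial derivative `∂L/∂xᵢ` is the contribution of the first queue minus that of the second.
A queue that receives no traffic contributes nothing, because its sums `A` and `C` vanish, while a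
queue that receives all traffic contributes a strictly positive amount. So `∂L/∂xᵢ < 0` at `x = 0`
and `∂L/∂xᵢ > 0` at `x = 1`. Moving one coordinate slightly into `[0, 1]` keeps the load
constraints strict, so a one-sided Fermat argument on that segment rules out both endpoints as
minimizers.
-/

open Filter Set Topology Function

theorem Function.one_sub_update {ι R : Type*} [DecidableEq ι] [One R] [Sub R] (y : ι → R) (i : ι)
    (v : R) : 1 - update y i v = update (1 - y) i (1 - v) := by
  ext j
  rcases eq_or_ne j i with rfl | hj
  · simp
  · simp [hj]

theorem HasDerivAt.nonneg_of_isLocalMinOn_Icc_left {f : ℝ → ℝ} {a b d : ℝ} (hab : a < b)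
    (hf : HasDerivAt f d a) (h : IsLocalMinOn f (Icc a b) a) : 0 ≤ d := by
  have hcone : b - a ∈ posTangentConeAt (Icc a b) a :=
    sub_mem_posTangentConeAt_of_segment_subset (segment_eq_Icc hab.le).subset
  have key : 0 ≤ (b - a) * d := by
    simpa using h.hasFDerivWithinAt_nonneg hf.hasFDerivAt.hasFDerivWithinAt hcone
  exact nonneg_of_mul_nonneg_right key (sub_pos.2 hab)

theorem HasDerivAt.nonpos_of_isLocalMinOn_Icc_right {f : ℝ → ℝ} {a b d : ℝ} (hab : a < b)
    (hf : HasDerivAt f d b) (h : IsLocalMinOn f (Icc a b) b) : d ≤ 0 := by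
  have hcone : a - b ∈ posTangentConeAt (Icc a b) b :=
    sub_mem_posTangentConeAt_of_segment_subset (by rw [segment_symm, segment_eq_Icc hab.le])
  have key : 0 ≤ (a - b) * d := by
    simpa using h.hasFDerivWithinAt_nonneg hf.hasFDerivAt.hasFDerivWithinAt hcone
  exact nonpos_of_mul_nonneg_right key (sub_neg.2 hab)

theorem not_isMinOn_of_hasDerivAt_update_neg {ι : Type*} [DecidableEq ι] {F : (ι → ℝ) → ℝ}
    {S : Set (ι → ℝ)} {y : ι → ℝ} {i : ι} {a b d : ℝ} (hab : a < b) (hyi : y i = a)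
    (hS : ∀ᶠ v in 𝓝[Icc a b] a, update y i v ∈ S)
    (hF : HasDerivAt (fun v => F (update y i v)) d a) (hd : d < 0) : ¬ IsMinOn F S y := by
  intro hmin
  have hloc : IsLocalMinOn (fun v => F (update y i v)) (Icc a b) a :=
    hS.mono fun v hv => by simpa [← hyi] using hmin hv
  exact hd.not_ge (hF.nonneg_of_isLocalMinOn_Icc_left hab hloc)

theorem not_isMinOn_of_hasDerivAt_update_pos {ι : Type*} [DecidableEq ι] {F : (ι → ℝ) → ℝ}
    {S : Set (ι → ℝ)} {y : ι → ℝ} {i : ι} {a b d : ℝ} (hab : a < b) (hyi : y i = b)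
    (hS : ∀ᶠ v in 𝓝[Icc a b] b, update y i v ∈ S)
    (hF : HasDerivAt (fun v => F (update y i v)) d b) (hd : 0 < d) : ¬ IsMinOn F S y := by
  intro hmin
  have hloc : IsLocalMinOn (fun v => F (update y i v)) (Icc a b) b :=
    hS.mono fun v hv => by simpa [← hyi] using hmin hv
  exact hd.not_ge (hF.nonpos_of_isLocalMinOn_Icc_right hab hloc)

namespace TwoQueue

variable {ι : Type*} [Fintype ι] (lam mu : ι → ℝ)

/-- `A C / (β (β - B))` in the paper's notation, with `A = ∑ λₖyₖ/μₖ²`, `B = ∑ λₖyₖ/μₖ`,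
`C = ∑ λₖyₖ`. -/
noncomputable def queueWait (β : ℝ) (y : ι → ℝ) : ℝ :=
  (∑ k, lam k * y k / mu k ^ 2) * (∑ k, lam k * y k) / (β * (β - ∑ k, lam k * y k / mu k))

noncomputable def queueWaitPartialDeriv (β : ℝ) (y : ι → ℝ) (i : ι) : ℝ :=
  (∑ k, lam k * y k) / (β * (β - ∑ k, lam k * y k / mu k)) * (lam i / mu i ^ 2) +
    (∑ k, lam k * y k / mu k ^ 2) / (β * (β - ∑ k, lam k * y k / mu k)) * lam i +
    (∑ k, lam k * y k / mu k ^ 2) * (∑ k, lam k * y k) /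
      (β * (β - ∑ k, lam k * y k / mu k) ^ 2) * (lam i / mu i)

theorem queueWaitPartialDeriv_zero (β : ℝ) (i : ι) : queueWaitPartialDeriv lam mu β 0 i = 0 := by
  simp [queueWaitPartialDeriv]

theorem queueWaitPartialDeriv_pos {β : ℝ} {y : ι → ℝ} {i : ι} (hlam : 0 < lam i) (hmu : 0 < mu i)
    (hβ : 0 < β) (hβy : ∑ k, lam k * y k / mu k < β) (hA : 0 ≤ ∑ k, lam k * y k / mu k ^ 2)
    (hC : 0 < ∑ k, lam k * y k) : 0 < queueWaitPartialDeriv lam mu β y i := by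
  have hden : 0 < β - ∑ k, lam k * y k / mu k := sub_pos.2 hβy
  unfold queueWaitPartialDeriv
  positivity

theorem queueWaitPartialDeriv_one_pos {β : ℝ} (hlam : ∀ k, 0 < lam k) (hmu : ∀ k, 0 < mu k)
    (hβ : 0 < β) (hload : ∑ k, lam k / mu k < β) (i : ι) :
    0 < queueWaitPartialDeriv lam mu β 1 i := by
  have hne : (Finset.univ : Finset ι).Nonempty := ⟨i, Finset.mem_univ i⟩
  refine queueWaitPartialDeriv_pos lam mu (hlam i) (hmu i) hβ (by simpa using hload) ?_ ?_
  · simpa using Finset.sum_nonneg fun k _ => (div_pos (hlam k) (pow_pos (hmu k) 2)).le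
  · simpa using Finset.sum_pos (fun k _ => hlam k) hne

variable [DecidableEq ι]

theorem hasDerivAt_queueWait_update {β : ℝ} (y : ι → ℝ) (i : ι) (hβ : β ≠ 0)
    (hβy : β - ∑ k, lam k * y k / mu k ≠ 0) :
    HasDerivAt (fun v => queueWait lam mu β (update y i v))
      (queueWaitPartialDeriv lam mu β y i) (y i) := by
  have hcoord := hasDerivAt_pi.1 (hasDerivAt_update y i (y i))
  have hA := HasDerivAt.fun_sum fun k (_ : k ∈ Finset.univ) =>
    ((hcoord k).const_mul (lam k)).div_const (mu k ^ 2)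
  have hB := HasDerivAt.fun_sum fun k (_ : k ∈ Finset.univ) =>
    ((hcoord k).const_mul (lam k)).div_const (mu k)
  have hC := HasDerivAt.fun_sum fun k (_ : k ∈ Finset.univ) => (hcoord k).const_mul (lam k)
  have hden := (hB.const_sub β).const_mul β
  refine ((hA.fun_mul hC).fun_div hden ?_).congr_deriv ?_
  · simpa only [update_eq_self] using mul_ne_zero hβ hβy
  · simp only [update_eq_self, Pi.single_apply, mul_ite, mul_one, mul_zero, ite_div, zero_div,
      Finset.sum_ite_eq', Finset.mem_univ, if_true, queueWaitPartialDeriv]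
    field_simp
    ring

noncomputable def twoQueueWait (α : ℝ) (y : ι → ℝ) : ℝ :=
  queueWait lam mu α y + queueWait lam mu (1 - α) (1 - y)

theorem hasDerivAt_twoQueueWait_update {α : ℝ} (y : ι → ℝ) (i : ι) (hα₀ : α ≠ 0) (hα₁ : 1 - α ≠ 0)
    (hy₀ : α - ∑ k, lam k * y k / mu k ≠ 0)
    (hy₁ : 1 - α - ∑ k, lam k * (1 - y k) / mu k ≠ 0) :
    HasDerivAt (fun v => twoQueueWait lam mu α (update y i v))
      (queueWaitPartialDeriv lam mu α y i - queueWaitPartialDeriv lam mu (1 - α) (1 - y) i)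
      (y i) := by
  have h₀ := hasDerivAt_queueWait_update lam mu y i hα₀ hy₀
  have h₁ := (hasDerivAt_queueWait_update lam mu (1 - y) i hα₁ hy₁).comp (y i)
    ((hasDerivAt_id (y i)).const_sub 1)
  have hsplit : (fun v => twoQueueWait lam mu α (update y i v)) = fun v =>
      queueWait lam mu α (update y i v) + queueWait lam mu (1 - α) (update (1 - y) i (1 - v)) := by
    funext v
    rw [twoQueueWait, one_sub_update]
  rw [hsplit]
  exact (h₀.add h₁).congr_deriv (by ring)

theorem hasDerivAt_twoQueueWait_update_zero {α : ℝ} (i : ι) (hα₀ : α ≠ 0) (hα₁ : 1 - α ≠ 0)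
    (hload : ∑ k, lam k / mu k ≠ 1 - α) :
    HasDerivAt (fun v => twoQueueWait lam mu α (update 0 i v))
      (-queueWaitPartialDeriv lam mu (1 - α) 1 i) 0 := by
  have := hasDerivAt_twoQueueWait_update lam mu 0 i hα₀ hα₁ (by simpa using hα₀)
    (by simpa using sub_ne_zero.2 hload.symm)
  simpa [queueWaitPartialDeriv_zero] using this

theorem hasDerivAt_twoQueueWait_update_one {α : ℝ} (i : ι) (hα₀ : α ≠ 0) (hα₁ : 1 - α ≠ 0)
    (hload : ∑ k, lam k / mu k ≠ α) :
    HasDerivAt (fun v => twoQueueWait lam mu α (update 1 i v))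
      (queueWaitPartialDeriv lam mu α 1 i) 1 := by
  have := hasDerivAt_twoQueueWait_update lam mu 1 i hα₀ hα₁
    (by simpa using sub_ne_zero.2 hload.symm) (by simpa using hα₁)
  simpa [queueWaitPartialDeriv_zero] using this

def feasibleSet (α : ℝ) : Set (ι → ℝ) :=
  {y | (∀ k, y k ∈ Icc 0 1) ∧ ∑ k, lam k * y k / mu k < α ∧ ∑ k, lam k * (1 - y k) / mu k < 1 - α}

theorem eventually_update_mem_feasibleSet {α : ℝ} {y : ι → ℝ} (hy : y ∈ feasibleSet lam mu α)
    (i : ι) : ∀ᶠ v in 𝓝[Icc 0 1] (y i), update y i v ∈ feasibleSet lam mu α := by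
  obtain ⟨hbox, hy₀, hy₁⟩ := hy
  have hcoord (k : ι) : Continuous fun v => update y i v k :=
    (continuous_apply k).comp (continuous_const.update i continuous_id : Continuous (update y i))
  have hopen : ∀ᶠ v in 𝓝 (y i), ∑ k, lam k * update y i v k / mu k < α ∧
      ∑ k, lam k * (1 - update y i v k) / mu k < 1 - α := by
    refine (ContinuousAt.eventually_lt (by fun_prop) continuousAt_const ?_).and
      (ContinuousAt.eventually_lt (by fun_prop) continuousAt_const ?_) <;>
    simpa
  filter_upwards [self_mem_nhdsWithin, nhdsWithin_le_nhds hopen] with v hv hv'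
  refine ⟨fun k => ?_, hv'⟩
  rcases eq_or_ne k i with rfl | hk
  · simpa using hv
  · simpa [hk] using hbox k

end TwoQueue

open TwoQueue

theorem stmt_14_general (n : ℕ) (hn : 0 < n) (lam mu : Fin n → ℝ)
    (hlam : ∀ k, 0 < lam k) (hmu : ∀ k, 0 < mu k)
    (α : ℝ) (hα : α ∈ Set.Ioo (0 : ℝ) 1)
    (hfeas0 : ∑ k, lam k / mu k < 1 - α) (hfeas1 : ∑ k, lam k / mu k < α)
    (L : (Fin n → ℝ) → ℝ)
    (hL : ∀ y : Fin n → ℝ, L y =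
      (∑ k, lam k * y k / (mu k) ^ 2) * (∑ k, lam k * y k) /
          (α * (α - ∑ k, lam k * y k / mu k)) +
        (∑ k, lam k * (1 - y k) / (mu k) ^ 2) * (∑ k, lam k * (1 - y k)) /
          ((1 - α) * (1 - α - ∑ k, lam k * (1 - y k) / mu k)))
    (S : Set (Fin n → ℝ))
    (hS : S = {y : Fin n → ℝ | (∀ k, y k ∈ Set.Icc (0 : ℝ) 1) ∧
      ∑ k, lam k * y k / mu k < α ∧
      ∑ k, lam k * (1 - y k) / mu k < 1 - α}) :
    (∀ i : Fin n,
        deriv (fun v : ℝ => L (Function.update (fun _ => (0 : ℝ)) i v)) 0 < 0) ∧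
      (∀ i : Fin n,
        0 < deriv (fun v : ℝ => L (Function.update (fun _ => (1 : ℝ)) i v)) 1) ∧
      ¬ (∀ y ∈ S, L (fun _ => (0 : ℝ)) ≤ L y) ∧
      ¬ (∀ y ∈ S, L (fun _ => (1 : ℝ)) ≤ L y) := by
  obtain ⟨hα₀, hα₁⟩ := hα
  obtain rfl : L = twoQueueWait lam mu α := funext hL
  obtain rfl : S = feasibleSet lam mu α := hS
  have hd₀ (i : Fin n) := hasDerivAt_twoQueueWait_update_zero lam mu i hα₀.ne' (sub_pos.2 hα₁).ne'
    hfeas0.ne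
  have hd₁ (i : Fin n) := hasDerivAt_twoQueueWait_update_one lam mu i hα₀.ne' (sub_pos.2 hα₁).ne'
    hfeas1.ne
  have hslope₀ (i : Fin n) : 0 < queueWaitPartialDeriv lam mu (1 - α) 1 i :=
    queueWaitPartialDeriv_one_pos lam mu hlam hmu (sub_pos.2 hα₁) hfeas0 i
  have hslope₁ (i : Fin n) : 0 < queueWaitPartialDeriv lam mu α 1 i :=
    queueWaitPartialDeriv_one_pos lam mu hlam hmu hα₀ hfeas1 i
  have hmem₀ : (0 : Fin n → ℝ) ∈ feasibleSet lam mu α := by simpa [feasibleSet] using ⟨hα₀, hfeas0⟩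
  have hmem₁ : (1 : Fin n → ℝ) ∈ feasibleSet lam mu α := by
    simpa [feasibleSet] using ⟨hfeas1, hα₁⟩
  obtain ⟨i⟩ : Nonempty (Fin n) := Fin.pos_iff_nonempty.mp hn
  refine ⟨fun i => ?_, fun i => ?_, ?_, ?_⟩
  · exact (hd₀ i).deriv ▸ neg_neg_of_pos (hslope₀ i)
  · exact (hd₁ i).deriv ▸ hslope₁ i
  · exact not_isMinOn_of_hasDerivAt_update_neg zero_lt_one rfl
      (eventually_update_mem_feasibleSet lam mu hmem₀ i) (hd₀ i)
      (neg_neg_of_pos (hslope₀ i))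
  · exact not_isMinOn_of_hasDerivAt_update_pos zero_lt_one rfl
      (eventually_update_mem_feasibleSet lam mu hmem₁ i) (hd₁ i) (hslope₁ i)

/-- When both `x = 0` and `x = 1` are feasible, all partial derivatives of the
unnormalized waiting-time objective are strictly negative at `x = 0` and
strictly positive at `x = 1`; hence neither is optimal. -/
theorem stmt_14 (n : ℕ) (hn : 0 < n) (lam mu : Fin n → ℝ)
    (hlam : ∀ k, 0 < lam k) (hmu : ∀ k, 0 < mu k)
    (α : ℝ) (hα : α ∈ Set.Ioo (0 : ℝ) 1)
    (htraffic : ∑ k, lam k / mu k < 1 - |2 * α - 1|)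
    (hfeas0 : ∑ k, lam k / mu k < 1 - α) (hfeas1 : ∑ k, lam k / mu k < α)
    (L : (Fin n → ℝ) → ℝ)
    (hL : ∀ y : Fin n → ℝ, L y =
      (∑ k, lam k * y k / (mu k) ^ 2) * (∑ k, lam k * y k) /
          (α * (α - ∑ k, lam k * y k / mu k)) +
        (∑ k, lam k * (1 - y k) / (mu k) ^ 2) * (∑ k, lam k * (1 - y k)) /
          ((1 - α) * (1 - α - ∑ k, lam k * (1 - y k) / mu k)))
    (S : Set (Fin n → ℝ))
    (hS : S = {y : Fin n → ℝ | (∀ k, y k ∈ Set.Icc (0 : ℝ) 1) ∧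
      ∑ k, lam k * y k / mu k < α ∧
      ∑ k, lam k * (1 - y k) / mu k < 1 - α}) :
    (∀ i : Fin n,
        deriv (fun v : ℝ => L (Function.update (fun _ => (0 : ℝ)) i v)) 0 < 0) ∧
      (∀ i : Fin n,
        0 < deriv (fun v : ℝ => L (Function.update (fun _ => (1 : ℝ)) i v)) 1) ∧
      ¬ (∀ y ∈ S, L (fun _ => (0 : ℝ)) ≤ L y) ∧
      ¬ (∀ y ∈ S, L (fun _ => (1 : ℝ)) ≤ L y) :=
  stmt_14_general n hn lam mu hlam hmu α hα hfeas0 hfeas1 L hL S hS
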